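/- Let {C_n : 0 ≤ n < 2^k} ∪ {C̄_n* : 0 ≤ n < 2^k} be a binary (2^{k+1}, 2^{k+1}, γ)-CCC, with C_n = {u^{a,n} : a ∈ {0,1}^{k+1}} and C̄_n = {v^{a,n} : a ∈ {0,1}^{k+1}} sets of unimodular length-γ sequences. Define D_n = {(u^{a,n}, u^{a,n}, −u^{a,n}) : a} and D̄_n = {(v^{a,n}, v^{a,n}, −v^{a,n}) : a}, sequences of length 3γ. Then the family {D_n : 0 ≤ n < 2^k} ∪ {D̄_n* : 0 ≤ n < 2^k} is a (2^{k+1}, 2^{k+1}, 3γ, 2γ)-ZCCS: for all n, n', Θ(D_n,D_{n'})(τ) = 3·2^{k+1}γ if n = n' and τ = 0, and 0 for 0 < |τ| < 2γ or (n ≠ n', |τ| < 2γ); the analogous statements hold within {D̄_n*} and across the two families. -/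
import Mathlib


open Complex BigOperators Finset

/-- Aperiodic cross-correlation sum of two length-`L` complex sequences. -/
noncomputable def accs (L : ℕ) (u v : ℕ → ℂ) (τ : ℤ) : ℂ :=
  if 0 ≤ τ ∧ τ < (L : ℤ) then
    ∑ k ∈ Finset.range (L - τ.toNat), u k * (starRingEnd ℂ) (v (k + τ.toNat))
  else if -(L : ℤ) < τ ∧ τ < 0 then
    ∑ k ∈ Finset.range (L - (-τ).toNat), u (k + (-τ).toNat) * (starRingEnd ℂ) (v k)
  else 0

/-! ### Auxiliary lemmas -/

lemma accs_ofNat (L : ℕ) (u v : ℕ → ℂ) (m : ℕ) (h : m < L) :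
    accs L u v (m : ℤ) =
      ∑ t ∈ Finset.range (L - m), u t * (starRingEnd ℂ) (v (t + m)) := by
  unfold accs
  rw [if_pos ⟨by omega, by omega⟩]
  simp only [show ((m : ℤ)).toNat = m from rfl]

lemma accs_negOfNat (L : ℕ) (u v : ℕ → ℂ) (m : ℕ) (h1 : 0 < m) (h2 : m < L) :
    accs L u v (-(m : ℤ)) =
      ∑ t ∈ Finset.range (L - m), u (t + m) * (starRingEnd ℂ) (v t) := by
  unfold accs
  rw [if_neg (by omega), if_pos ⟨by omega, by omega⟩]
  simp only [neg_neg, show ((m : ℤ)).toNat = m from rfl]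

lemma accs_neg (L : ℕ) (u v : ℕ → ℂ) (τ : ℤ) :
    accs L u v (-τ) = (starRingEnd ℂ) (accs L v u τ) := by
  unfold accs
  by_cases h1 : 0 ≤ τ ∧ τ < (L : ℤ)
  · by_cases h0 : τ = 0
    · subst h0
      simp only [neg_zero]
      rw [if_pos h1, if_pos h1, map_sum]
      refine Finset.sum_congr rfl fun i _ => ?_
      simp [map_mul, mul_comm]
    · have hn1 : ¬(0 ≤ -τ ∧ -τ < (L : ℤ)) := by omega
      have hn2 : -(L : ℤ) < -τ ∧ -τ < 0 := by omega
      rw [if_neg hn1, if_pos hn2, if_pos h1, map_sum]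
      simp only [neg_neg]
      refine Finset.sum_congr rfl fun i _ => ?_
      simp [map_mul, mul_comm]
  · by_cases h2 : -(L : ℤ) < τ ∧ τ < 0
    · have hp : 0 ≤ -τ ∧ -τ < (L : ℤ) := by omega
      rw [if_pos hp, if_neg h1, if_pos h2, map_sum]
      refine Finset.sum_congr rfl fun i _ => ?_
      simp [map_mul, mul_comm]
    · have hn1 : ¬(0 ≤ -τ ∧ -τ < (L : ℤ)) := by omega
      have hn2 : ¬(-(L : ℤ) < -τ ∧ -τ < 0) := by omega
      rw [if_neg hn1, if_neg hn2, if_neg h1, if_neg h2, map_zero]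

lemma eps_one {γ t : ℕ} (hγ : 0 < γ) (h : t < 2 * γ) :
    (if t / γ = 2 then (-1 : ℂ) else 1) = 1 := by
  rw [if_neg]
  intro heq
  have h2 := Nat.div_mul_le_self t γ
  rw [heq] at h2
  omega

lemma eps_two {γ t : ℕ} (h1 : 2 * γ ≤ t) (h2 : t < 3 * γ) :
    (if t / γ = 2 then (-1 : ℂ) else 1) = -1 := by
  rw [if_pos]
  exact Nat.div_eq_of_lt_le (by omega) (by omega)

lemma mod_self_add {γ s : ℕ} (h : s < γ) : (γ + s) % γ = s := by
  rw [Nat.add_mod_left]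
  exact Nat.mod_eq_of_lt h

lemma mod_two_add {γ s : ℕ} (h : s < γ) : (2 * γ + s) % γ = s := by
  rw [show 2 * γ + s = γ + (γ + s) from by ring, Nat.add_mod_left, Nat.add_mod_left]
  exact Nat.mod_eq_of_lt h

lemma split5 (F : ℕ → ℂ) (a b : ℕ) :
    ∑ t ∈ Finset.range (a + (b + (a + (b + a)))), F t =
      (∑ i ∈ Finset.range a, F i) + (∑ i ∈ Finset.range b, F (a + i)) +
      (∑ i ∈ Finset.range a, F (a + b + i)) +
      (∑ i ∈ Finset.range b, F (2 * a + b + i)) +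
      (∑ i ∈ Finset.range a, F (2 * a + 2 * b + i)) := by
  rw [Finset.sum_range_add, Finset.sum_range_add, Finset.sum_range_add,
    Finset.sum_range_add]
  simp only [← add_assoc]
  simp only [show ∀ i, a + b + a + i = 2 * a + b + i from fun i => by omega]
  simp only [show ∀ i, 2 * a + b + b + i = 2 * a + 2 * b + i from fun i => by omega]

lemma split3 (F : ℕ → ℂ) (a b : ℕ) :
    ∑ t ∈ Finset.range (a + (b + a)), F t =
      (∑ i ∈ Finset.range a, F i) + (∑ i ∈ Finset.range b, F (a + i)) +
      (∑ i ∈ Finset.range a, F (a + b + i)) := by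
  rw [Finset.sum_range_add, Finset.sum_range_add]
  simp only [show ∀ i, a + (b + i) = a + b + i from fun i => by omega]
  ring

lemma blocks1 (γ : ℕ) (hγ : 0 < γ) (u v : ℕ → ℂ) (m : ℕ) (hm : m < γ) :
    ∑ t ∈ Finset.range (3 * γ - m),
      (if t / γ = 2 then (-1 : ℂ) else 1) * u (t % γ) *
        (starRingEnd ℂ) ((if (t + m) / γ = 2 then (-1 : ℂ) else 1) * v ((t + m) % γ)) =
    3 * ∑ t ∈ Finset.range (γ - m), u t * (starRingEnd ℂ) (v (t + m)) := by
  rw [show 3 * γ - m = (γ - m) + (m + ((γ - m) + (m + (γ - m)))) from by omega, split5]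
  have c1 : (∑ i ∈ Finset.range (γ - m),
      (if i / γ = 2 then (-1 : ℂ) else 1) * u (i % γ) *
        (starRingEnd ℂ) ((if (i + m) / γ = 2 then (-1 : ℂ) else 1) * v ((i + m) % γ))) =
      ∑ t ∈ Finset.range (γ - m), u t * (starRingEnd ℂ) (v (t + m)) := by
    refine Finset.sum_congr rfl fun i hi => ?_
    simp only [Finset.mem_range] at hi
    rw [eps_one hγ (by omega), eps_one hγ (by omega), Nat.mod_eq_of_lt (by omega),
      Nat.mod_eq_of_lt (by omega), one_mul, one_mul]
  have c2 : (∑ i ∈ Finset.range m,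
      (if (γ - m + i) / γ = 2 then (-1 : ℂ) else 1) * u ((γ - m + i) % γ) *
        (starRingEnd ℂ) ((if (γ - m + i + m) / γ = 2 then (-1 : ℂ) else 1) *
          v ((γ - m + i + m) % γ))) =
      ∑ i ∈ Finset.range m, u (γ - m + i) * (starRingEnd ℂ) (v i) := by
    refine Finset.sum_congr rfl fun i hi => ?_
    simp only [Finset.mem_range] at hi
    rw [show γ - m + i + m = γ + i from by omega, eps_one hγ (by omega),
      eps_one hγ (by omega), Nat.mod_eq_of_lt (by omega), mod_self_add (by omega),
      one_mul, one_mul]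
  have c3 : (∑ i ∈ Finset.range (γ - m),
      (if (γ - m + m + i) / γ = 2 then (-1 : ℂ) else 1) * u ((γ - m + m + i) % γ) *
        (starRingEnd ℂ) ((if (γ - m + m + i + m) / γ = 2 then (-1 : ℂ) else 1) *
          v ((γ - m + m + i + m) % γ))) =
      ∑ t ∈ Finset.range (γ - m), u t * (starRingEnd ℂ) (v (t + m)) := by
    refine Finset.sum_congr rfl fun i hi => ?_
    simp only [Finset.mem_range] at hi
    rw [show γ - m + m + i + m = γ + (i + m) from by omega,
      show γ - m + m + i = γ + i from by omega, eps_one hγ (by omega),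
      eps_one hγ (by omega), mod_self_add (by omega), mod_self_add (by omega),
      one_mul, one_mul]
  have c4 : (∑ i ∈ Finset.range m,
      (if (2 * (γ - m) + m + i) / γ = 2 then (-1 : ℂ) else 1) *
        u ((2 * (γ - m) + m + i) % γ) *
        (starRingEnd ℂ) ((if (2 * (γ - m) + m + i + m) / γ = 2 then (-1 : ℂ) else 1) *
          v ((2 * (γ - m) + m + i + m) % γ))) =
      ∑ i ∈ Finset.range m, -(u (γ - m + i) * (starRingEnd ℂ) (v i)) := by
    refine Finset.sum_congr rfl fun i hi => ?_
    simp only [Finset.mem_range] at hi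
    rw [show 2 * (γ - m) + m + i + m = 2 * γ + i from by omega,
      show 2 * (γ - m) + m + i = γ + (γ - m + i) from by omega,
      eps_one hγ (by omega), eps_two (by omega) (by omega),
      mod_self_add (by omega), mod_two_add (by omega)]
    simp only [map_mul, map_neg, map_one]
    ring
  have c5 : (∑ i ∈ Finset.range (γ - m),
      (if (2 * (γ - m) + 2 * m + i) / γ = 2 then (-1 : ℂ) else 1) *
        u ((2 * (γ - m) + 2 * m + i) % γ) *
        (starRingEnd ℂ) ((if (2 * (γ - m) + 2 * m + i + m) / γ = 2 then (-1 : ℂ) else 1) *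
          v ((2 * (γ - m) + 2 * m + i + m) % γ))) =
      ∑ t ∈ Finset.range (γ - m), u t * (starRingEnd ℂ) (v (t + m)) := by
    refine Finset.sum_congr rfl fun i hi => ?_
    simp only [Finset.mem_range] at hi
    rw [show 2 * (γ - m) + 2 * m + i + m = 2 * γ + (i + m) from by omega,
      show 2 * (γ - m) + 2 * m + i = 2 * γ + i from by omega,
      eps_two (by omega) (by omega), eps_two (by omega) (by omega),
      mod_two_add (by omega), mod_two_add (by omega)]
    simp only [map_mul, map_neg, map_one]
    ring
  rw [c1, c2, c3, c4, c5, Finset.sum_neg_distrib]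
  ring

lemma blocks2 (γ : ℕ) (hγ : 0 < γ) (u v : ℕ → ℂ) (m : ℕ) (h1 : γ ≤ m) (h2 : m < 2 * γ) :
    ∑ t ∈ Finset.range (3 * γ - m),
      (if t / γ = 2 then (-1 : ℂ) else 1) * u (t % γ) *
        (starRingEnd ℂ) ((if (t + m) / γ = 2 then (-1 : ℂ) else 1) * v ((t + m) % γ)) =
    -∑ t ∈ Finset.range (m - γ), u (t + (2 * γ - m)) * (starRingEnd ℂ) (v t) := by
  rw [show 3 * γ - m = (2 * γ - m) + ((m - γ) + (2 * γ - m)) from by omega, split3]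
  have d1 : (∑ i ∈ Finset.range (2 * γ - m),
      (if i / γ = 2 then (-1 : ℂ) else 1) * u (i % γ) *
        (starRingEnd ℂ) ((if (i + m) / γ = 2 then (-1 : ℂ) else 1) * v ((i + m) % γ))) =
      ∑ i ∈ Finset.range (2 * γ - m), u i * (starRingEnd ℂ) (v (i + (m - γ))) := by
    refine Finset.sum_congr rfl fun i hi => ?_
    simp only [Finset.mem_range] at hi
    rw [show i + m = γ + (i + (m - γ)) from by omega, eps_one hγ (by omega),
      eps_one hγ (by omega), Nat.mod_eq_of_lt (by omega), mod_self_add (by omega),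
      one_mul, one_mul]
  have d2 : (∑ i ∈ Finset.range (m - γ),
      (if (2 * γ - m + i) / γ = 2 then (-1 : ℂ) else 1) * u ((2 * γ - m + i) % γ) *
        (starRingEnd ℂ) ((if (2 * γ - m + i + m) / γ = 2 then (-1 : ℂ) else 1) *
          v ((2 * γ - m + i + m) % γ))) =
      ∑ i ∈ Finset.range (m - γ), -(u (i + (2 * γ - m)) * (starRingEnd ℂ) (v i)) := by
    refine Finset.sum_congr rfl fun i hi => ?_
    simp only [Finset.mem_range] at hi
    rw [show 2 * γ - m + i + m = 2 * γ + i from by omega,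
      show 2 * γ - m + i = i + (2 * γ - m) from by omega,
      eps_one hγ (by omega), eps_two (by omega) (by omega),
      Nat.mod_eq_of_lt (by omega), mod_two_add (by omega)]
    simp only [map_mul, map_neg, map_one]
    ring
  have d3 : (∑ i ∈ Finset.range (2 * γ - m),
      (if (2 * γ - m + (m - γ) + i) / γ = 2 then (-1 : ℂ) else 1) *
        u ((2 * γ - m + (m - γ) + i) % γ) *
        (starRingEnd ℂ) ((if (2 * γ - m + (m - γ) + i + m) / γ = 2 then (-1 : ℂ) else 1) *
          v ((2 * γ - m + (m - γ) + i + m) % γ))) =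
      ∑ i ∈ Finset.range (2 * γ - m), -(u i * (starRingEnd ℂ) (v (i + (m - γ)))) := by
    refine Finset.sum_congr rfl fun i hi => ?_
    simp only [Finset.mem_range] at hi
    rw [show 2 * γ - m + (m - γ) + i + m = 2 * γ + (i + (m - γ)) from by omega,
      show 2 * γ - m + (m - γ) + i = γ + i from by omega,
      eps_one hγ (by omega), eps_two (by omega) (by omega),
      mod_self_add (by omega), mod_two_add (by omega)]
    simp only [map_mul, map_neg, map_one]
    ring
  rw [d1, d2, d3, Finset.sum_neg_distrib, Finset.sum_neg_distrib]
  ring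

lemma core (γ : ℕ) (hγ : 0 < γ) (u v : ℕ → ℂ) (m : ℕ) (hm : m < 2 * γ) :
    accs (3 * γ) (fun t => (if t / γ = 2 then (-1 : ℂ) else 1) * u (t % γ))
        (fun t => (if t / γ = 2 then (-1 : ℂ) else 1) * v (t % γ)) (m : ℤ) =
      if m < γ then 3 * accs γ u v (m : ℤ) else -accs γ u v ((m : ℤ) - 2 * γ) := by
  rw [accs_ofNat _ _ _ m (by omega)]
  by_cases hmγ : m < γ
  · rw [if_pos hmγ, accs_ofNat _ _ _ m hmγ]
    exact blocks1 γ hγ u v m hmγ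
  · rw [if_neg hmγ]
    push_neg at hmγ
    rcases eq_or_lt_of_le hmγ with heq | hlt
    · have hz : accs γ u v ((m : ℤ) - 2 * γ) = 0 := by
        unfold accs
        rw [if_neg (by omega), if_neg (by omega)]
      rw [hz, neg_zero]
      have hb := blocks2 γ hγ u v m hmγ hm
      rw [hb, show m - γ = 0 from by omega]
      simp
    · have he : (m : ℤ) - 2 * γ = -(((2 * γ - m : ℕ) : ℤ)) := by omega
      rw [he, accs_negOfNat γ u v (2 * γ - m) (by omega) (by omega),
        show γ - (2 * γ - m) = m - γ from by omega]
      exact blocks2 γ hγ u v m hmγ hm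

theorem stmt_7 (k γ : ℕ) (hγ : 0 < γ)
    (C Cb : Fin (2 ^ k) → Fin (2 ^ (k + 1)) → ℕ → ℂ)
    (huni : ∀ n a t, t < γ → ‖C n a t‖ = 1 ∧ ‖Cb n a t‖ = 1)
    (D : Fin (2 ^ k) ⊕ Fin (2 ^ k) → Fin (2 ^ (k + 1)) → ℕ → ℂ)
    (hD1 : ∀ n, D (Sum.inl n) = C n)
    (hD2 : ∀ n a t, D (Sum.inr n) a t = (starRingEnd ℂ) (Cb n a t))
    (hccc : ∀ i j (τ : ℤ), |τ| < (γ : ℤ) →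
      ∑ a, accs γ (D i a) (D j a) τ =
        if i = j ∧ τ = 0 then ((2 : ℂ) ^ (k + 1) * γ) else 0)
    (G : Fin (2 ^ k) ⊕ Fin (2 ^ k) → Fin (2 ^ (k + 1)) → ℕ → ℂ)
    (hG1 : ∀ n a t, G (Sum.inl n) a t =
      (if t / γ = 2 then -1 else 1) * C n a (t % γ))
    (hG2 : ∀ n a t, G (Sum.inr n) a t =
      (if t / γ = 2 then -1 else 1) * (starRingEnd ℂ) (Cb n a (t % γ))) :
    ∀ i j (τ : ℤ), |τ| < 2 * γ →
      ∑ a, accs (3 * γ) (G i a) (G j a) τ =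
        if i = j ∧ τ = 0 then ((3 : ℂ) * 2 ^ (k + 1) * γ) else 0 := by
  have hGfun : ∀ i a, G i a =
      fun t => (if t / γ = 2 then (-1 : ℂ) else 1) * D i a (t % γ) := by
    rintro (n | n) a <;> funext t
    · rw [hG1, hD1]
    · rw [hG2, hD2]
  have pos : ∀ i j (m : ℕ), m < 2 * γ →
      ∑ a, accs (3 * γ) (G i a) (G j a) (m : ℤ) =
        if i = j ∧ (m : ℤ) = 0 then ((3 : ℂ) * 2 ^ (k + 1) * γ) else 0 := by
    intro i j m hm
    by_cases hmγ : m < γ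
    · have step : ∀ a, accs (3 * γ) (G i a) (G j a) (m : ℤ) =
          3 * accs γ (D i a) (D j a) (m : ℤ) := by
        intro a
        rw [hGfun i a, hGfun j a, core γ hγ (D i a) (D j a) m hm, if_pos hmγ]
      have habs : |(m : ℤ)| < (γ : ℤ) := by rw [abs_lt]; omega
      simp only [step]
      rw [← Finset.mul_sum, hccc i j (m : ℤ) habs]
      split_ifs <;> ring
    · have step : ∀ a, accs (3 * γ) (G i a) (G j a) (m : ℤ) =
          -accs γ (D i a) (D j a) ((m : ℤ) - 2 * γ) := by
        intro a
        rw [hGfun i a, hGfun j a, core γ hγ (D i a) (D j a) m hm, if_neg hmγ]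
      simp only [step]
      rw [Finset.sum_neg_distrib]
      push_neg at hmγ
      rcases eq_or_lt_of_le hmγ with heq | hlt
      · have hz : ∀ a, accs γ (D i a) (D j a) ((m : ℤ) - 2 * γ) = 0 := by
          intro a
          unfold accs
          rw [if_neg (by omega), if_neg (by omega)]
        simp only [hz, Finset.sum_const_zero, neg_zero]
        rw [if_neg (by rintro ⟨-, h⟩; omega)]
      · have habs : |(m : ℤ) - 2 * γ| < (γ : ℤ) := by rw [abs_lt]; omega
        rw [hccc i j ((m : ℤ) - 2 * γ) habs,
          if_neg (by rintro ⟨-, h⟩; omega), neg_zero,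
          if_neg (by rintro ⟨-, h⟩; omega)]
  intro i j τ hτ
  rw [abs_lt] at hτ
  rcases le_or_gt 0 τ with h0 | h0
  · obtain ⟨m, rfl⟩ : ∃ m : ℕ, τ = (m : ℤ) := ⟨τ.toNat, by omega⟩
    exact pos i j m (by omega)
  · obtain ⟨p, rfl⟩ : ∃ p : ℕ, τ = -(p : ℤ) := ⟨(-τ).toNat, by omega⟩
    have e : ∑ a, accs (3 * γ) (G i a) (G j a) (-(p : ℤ)) =
        (starRingEnd ℂ) (∑ a, accs (3 * γ) (G j a) (G i a) (p : ℤ)) := by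
      rw [map_sum]
      exact Finset.sum_congr rfl fun a _ => accs_neg _ _ _ _
    rw [e, pos j i p (by omega), if_neg (by rintro ⟨-, h⟩; omega), map_zero,
      if_neg (by rintro ⟨-, h⟩; omega)]
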